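/- arXiv:2605.28484 — 2 statements merged into one kernel-verified Lean document; each statement's English description precedes it below -/
import Mathlib

section
/- Sequential extension is equivalent to coKleisli composition: for all coKleisli arrows r₁ : Zipper α → β and r₂ : Zipper β → γ over the list Zipper comonad, extend r₂ ∘ extend r₁ = extend (r₁ >=> r₂); applying two rules in sequence by two extend passes yields the same global transformation as one extend pass of their coKleisli composite. -/
/-- A list zipper: a focused element with left context (stored reversed,
nearest neighbor first) and right context. -/
structure Zipper (α : Type*) where
  left : List α
  focus : α
  right : List α

namespace Zipper

variable {α β γ δ : Type*}

/-- Extract the focused element. -/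
def extract (z : Zipper α) : α := z.focus

/-- Move the focus one step to the left (identity if the left context is empty). -/
def moveLeft : Zipper α → Zipper α
  | ⟨a :: l, c, r⟩ => ⟨l, a, c :: r⟩
  | z => z

/-- Move the focus one step to the right (identity if the right context is empty). -/
def moveRight : Zipper α → Zipper α
  | ⟨l, c, b :: r⟩ => ⟨c :: l, b, r⟩
  | z => z

/-- Auxiliary: successive left shifts, structurally on the left context. -/
def leftsAux : List α → α → List α → List (Zipper α)
  | [], _, _ => []
  | a :: l, c, r => ⟨l, a, c :: r⟩ :: leftsAux l a (c :: r)

/-- The list [moveLeft z, moveLeft (moveLeft z), …] of successive left shifts. -/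
def lefts (z : Zipper α) : List (Zipper α) := leftsAux z.left z.focus z.right

/-- Auxiliary: successive right shifts, structurally on the right context. -/
def rightsAux : List α → α → List α → List (Zipper α)
  | _, _, [] => []
  | l, c, b :: r => ⟨c :: l, b, r⟩ :: rightsAux (c :: l) b r

/-- The list [moveRight z, moveRight (moveRight z), …] of successive right shifts. -/
def rights (z : Zipper α) : List (Zipper α) := rightsAux z.left z.focus z.right

/-- CoKleisli extension: apply the local rule `f` at every position. -/
def extend (f : Zipper α → β) (z : Zipper α) : Zipper β :=
  ⟨(lefts z).map f, f z, (rights z).map f⟩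

/-- The underlying list of a zipper. -/
def toList (z : Zipper α) : List α := z.left.reverse ++ [z.focus] ++ z.right

/-- The zipper refocused at position `i` (intended for `i < (toList z).length`). -/
def focusAt (z : Zipper α) (i : ℕ) : Zipper α :=
  ⟨((toList z).take i).reverse, (toList z).getD i z.focus, (toList z).drop (i + 1)⟩

end Zipper

/-- CoKleisli composition over the list Zipper comonad. -/
def cokComp {α β γ : Type*} (f : Zipper α → β) (g : Zipper β → γ) : Zipper α → γ :=
  fun z => g (Zipper.extend f z)

/-! Shifting the focus commutes with `extend f`: the shifts of `extend f z` are `extend f` applied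
to the shifts of `z`. Hence at every position the second pass evaluates `r₂` on `extend r₁` of the
corresponding shift of `z`, which is the composite `cokComp r₁ r₂` evaluated there. -/

namespace Zipper

variable {α β γ : Type*}

theorem leftsAux_map_extend (f : Zipper α → β) (l : List α) (c : α) (r : List α) :
    leftsAux ((leftsAux l c r).map f) (f ⟨l, c, r⟩) ((rightsAux l c r).map f)
      = (leftsAux l c r).map (extend f) := by
  induction l generalizing c r with
  | nil => rfl
  -- `rightsAux l a (c :: r)` unfolds to `⟨a :: l, c, r⟩ :: rightsAux (a :: l) c r`, so the new
  -- head is `extend f ⟨l, a, c :: r⟩` definitionally and the tail is the hypothesis.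
  | cons a l ih => exact congrArg (extend f ⟨l, a, c :: r⟩ :: ·) (ih a (c :: r))

theorem rightsAux_map_extend (f : Zipper α → β) (l : List α) (c : α) (r : List α) :
    rightsAux ((leftsAux l c r).map f) (f ⟨l, c, r⟩) ((rightsAux l c r).map f)
      = (rightsAux l c r).map (extend f) := by
  induction r generalizing l c with
  | nil => rfl
  | cons b r ih => exact congrArg (extend f ⟨c :: l, b, r⟩ :: ·) (ih (c :: l) b)

theorem lefts_extend (f : Zipper α → β) (z : Zipper α) :
    lefts (extend f z) = (lefts z).map (extend f) :=
  leftsAux_map_extend f z.left z.focus z.right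

theorem rights_extend (f : Zipper α → β) (z : Zipper α) :
    rights (extend f z) = (rights z).map (extend f) :=
  rightsAux_map_extend f z.left z.focus z.right

theorem extend_extend (f : Zipper α → β) (g : Zipper β → γ) (z : Zipper α) :
    extend g (extend f z) = extend (g ∘ extend f) z := by
  rw [extend, lefts_extend, rights_extend, List.map_map, List.map_map]
  rfl

end Zipper

/-- Sequential extension equals one extend pass of the coKleisli composite. -/
theorem extend_comp_extend_eq_extend_cokComp {α β γ : Type*}
    (r₁ : Zipper α → β) (r₂ : Zipper β → γ) :
    Zipper.extend r₂ ∘ Zipper.extend r₁ = Zipper.extend (cokComp r₁ r₂) :=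
  funext fun z => Zipper.extend_extend r₁ r₂ z
end

section
/- Equivalence of the Writer deletion pipeline and the sentinel-filtering pipeline (single stage): let sentinel s₀ : α be a designated deletion marker and f : Zipper α → α any local rule. Define the Writer lift fW : Set ℕ × Zipper α → Set ℕ × α by fW (w, z) = (w ∪ {(z.left).length}, extract z) if f z = s₀, and fW (w, z) = (w, f z) otherwise. Then for every zipper z, materialize (extendW fW (∅, z)) = (toList (extend f z)).filter (· ≠ s₀), where materialize (w, z') deletes from toList z' the elements at the index positions in w. That is, accumulating deletion positions in the Writer comonad and deleting once at the end produces exactly the same string as inserting the sentinel at each deleted position and filtering it out afterwards. -/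
open Zipper in
/-- Writer comonad counit: empty deletion set paired with the zipper focus. -/
def extractW {α : Type*} (p : Set ℕ × Zipper α) : Set ℕ × α :=
  (∅, Zipper.extract p.2)

open Zipper in
/-- Writer comonad extension: accumulate (by union) the deletion sets produced
by `f` at every position, and extend the value component over the zipper. -/
def extendW {α β : Type*} (f : Set ℕ × Zipper α → Set ℕ × β)
    (p : Set ℕ × Zipper α) : Set ℕ × Zipper β :=
  (p.1 ∪ ⋃ i ∈ Finset.range (Zipper.toList p.2).length, (f (p.1, Zipper.focusAt p.2 i)).1,
   Zipper.extend (fun z' => (f (p.1, z')).2) p.2)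

/-- The Writer lift of a local rule f with sentinel s₀: if f fires the sentinel,
record the current position in the deletion set and keep the original focus;
otherwise apply f with no deletion. -/
def writerLift {α : Type*} [DecidableEq α] (s₀ : α) (f : Zipper α → α) :
    Set ℕ × Zipper α → Set ℕ × α :=
  fun p =>
    if f p.2 = s₀ then (p.1 ∪ {p.2.left.length}, Zipper.extract p.2)
    else (p.1, f p.2)

open Classical in
/-- Materialize: delete from the underlying list of the zipper the elements
whose index lies in the deletion set. -/
noncomputable def materialize {α : Type*} (p : Set ℕ × Zipper α) : List α :=
  (((Zipper.toList p.2).zipIdx.map Prod.swap).filter (fun q => q.1 ∉ p.1)).map Prod.snd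

namespace Zipper

variable {α β : Type*}

theorem length_toList (z : Zipper α) :
    (toList z).length = z.left.length + 1 + z.right.length := by
  simp [toList]
  omega

theorem focusAt_congr {z z' : Zipper α} (h : toList z = toList z') {i : ℕ}
    (hi : i < (toList z).length) : focusAt z i = focusAt z' i := by
  rw [h] at hi
  simp only [focusAt, h, List.getD_eq_getElem _ _ hi]

theorem focusAt_left_length (z : Zipper α) : focusAt z z.left.length = z := by
  obtain ⟨l, c, r⟩ := z
  have hl : l.length < (toList ⟨l, c, r⟩).length := by simp [toList]
  simp only [focusAt, List.getD_eq_getElem _ _ hl]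
  simp [toList, List.drop_append]

theorem left_length_focusAt (z : Zipper α) {i : ℕ} (hi : i < (toList z).length) :
    (focusAt z i).left.length = i := by
  simp only [focusAt, List.length_reverse, List.length_take]
  omega

theorem toList_moveRight (z : Zipper α) : toList (moveRight z) = toList z := by
  obtain ⟨l, c, _ | ⟨b, r⟩⟩ := z <;> simp [moveRight, toList]

theorem reverse_leftsAux (l : List α) (c : α) (r : List α) :
    (leftsAux l c r).reverse = (List.range l.length).map (focusAt ⟨l, c, r⟩) := by
  induction l generalizing c r with
  | nil => rfl
  | cons a l ih =>
    have hshift : toList ⟨a :: l, c, r⟩ = toList ⟨l, a, c :: r⟩ :=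
      toList_moveRight ⟨l, a, c :: r⟩
    rw [leftsAux, List.reverse_cons, ih, List.length_cons, List.range_succ, List.map_append,
      List.map_singleton, focusAt_congr hshift (by simp [toList]), focusAt_left_length]
    congr 1
    refine List.map_congr_left fun j hj => (focusAt_congr hshift ?_).symm
    simp [toList] at hj ⊢
    omega

theorem rightsAux_eq (l : List α) (c : α) (r : List α) :
    rightsAux l c r = (List.range' (l.length + 1) r.length).map (focusAt ⟨l, c, r⟩) := by
  induction r generalizing l c with
  | nil => rfl
  | cons b r ih =>
    have hshift : toList ⟨c :: l, b, r⟩ = toList ⟨l, c, b :: r⟩ :=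
      toList_moveRight ⟨l, c, b :: r⟩
    simp only [rightsAux, ih, List.length_cons, List.range'_succ, List.map_cons]
    rw [← focusAt_congr hshift (by simp [toList]), show l.length + 1 = (c :: l).length from rfl,
      focusAt_left_length]
    congr 1
    refine List.map_congr_left fun j hj => focusAt_congr hshift ?_
    simp [toList] at hj ⊢
    omega

theorem toList_extend (f : Zipper α → β) (z : Zipper α) :
    toList (extend f z) = (List.range (toList z).length).map (fun i => f (focusAt z i)) := by
  obtain ⟨l, c, r⟩ := z
  have hrange : List.range (l.length + 1 + r.length) =
      List.range l.length ++ [l.length] ++ List.range' (l.length + 1) r.length := by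
    rw [← List.range_succ, List.range_eq_range', List.range_eq_range', ← List.range'_append]
    simp
  rw [length_toList, hrange, List.map_append, List.map_append, List.map_singleton,
    focusAt_left_length]
  simp only [toList, extend, lefts, rights, ← List.map_reverse, reverse_leftsAux, rightsAux_eq,
    List.map_map]
  rfl

end Zipper

open Zipper

open Classical in
theorem materialize_of_toList_eq_map {α : Type*} (w : Set ℕ) (z : Zipper α) {n : ℕ}
    {g : ℕ → α} (hz : toList z = (List.range n).map g) :
    materialize (w, z) = ((List.range n).filter (· ∉ w)).map g := by
  have hidx : ((List.range n).map g).zipIdx.map Prod.swap = (List.range n).map fun i => (i, g i) :=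
    List.ext_getElem (by simp) fun i _ _ => by simp
  simp only [materialize, hz, hidx, List.filter_map, List.map_map]
  rfl

theorem fst_extendW_writerLift {α : Type*} [DecidableEq α] (s₀ : α) (f : Zipper α → α)
    (w : Set ℕ) (z : Zipper α) :
    (extendW (writerLift s₀ f) (w, z)).1 =
      w ∪ {i | i < (toList z).length ∧ f (focusAt z i) = s₀} := by
  ext i
  simp only [extendW, writerLift, apply_ite Prod.fst, Set.mem_union, Set.mem_iUnion,
    Finset.mem_range, Set.mem_ofPred_eq]
  constructor
  · rintro (hw | ⟨j, hj, hi⟩)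
    · exact .inl hw
    · split_ifs at hi with hfj
      · rcases hi with hw | rfl
        · exact .inl hw
        · exact .inr (by rw [left_length_focusAt z hj]; exact ⟨hj, hfj⟩)
      · exact .inl hi
  · rintro (hw | ⟨hi, hfi⟩)
    · exact .inl hw
    · exact .inr ⟨i, hi, by simp [hfi, left_length_focusAt z hi]⟩

/-- Equivalence of the Writer deletion pipeline and the sentinel-filtering
pipeline (single stage). -/
theorem writer_pipeline_eq_sentinel_pipeline {α : Type*} [DecidableEq α]
    (s₀ : α) (f : Zipper α → α) (z : Zipper α) :
    materialize (extendW (writerLift s₀ f) (∅, z)) =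
      (Zipper.toList (Zipper.extend f z)).filter (· ≠ s₀) := by
  have hvalues : toList (extendW (writerLift s₀ f) (∅, z)).2 =
      (List.range (toList z).length).map fun i => (writerLift s₀ f (∅, focusAt z i)).2 :=
    toList_extend _ z
  rw [← Prod.mk.eta (p := extendW _ _), materialize_of_toList_eq_map _ _ hvalues,
    fst_extendW_writerLift, toList_extend, List.filter_map, Set.empty_union,
    List.filter_congr (q := fun i => f (focusAt z i) ≠ s₀) fun i hi => by simp_all]
  refine List.map_congr_left fun i hi => ?_
  simp_all [writerLift]
end
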